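/- For p, d ∈ [0, 1/2] with d ≤ p, the quantity Δ = H(d) - (1 - p + d) H(d/(1 - p + d)) satisfies Δ = (1-p)log₂(1-p) - (1-d)log₂(1-d) - (1-p+d)log₂(1-p+d), and Δ ≤ min( 2(p-d)log₂ e, 2d log₂ e ). -/

import Mathlib

noncomputable def binH (p : ℝ) : ℝ :=
  -(p * Real.logb 2 p) - (1 - p) * Real.logb 2 (1 - p)

/-!
The closed form comes from `logb (x / s) = logb x - logb s` with `s = 1 - p + d`. For the bounds,
pass to natural logarithms: as `1 - p ≥ 1/2 ≥ e⁻¹` and `x log x` increases on `[e⁻¹, ∞)`, the term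
`(1 - p) log (1 - p)` is dominated by either subtracted term, and the other one is bounded through
`-y log y ≤ 1 - y` by `p - d`, resp. `d`.
-/

open Real

lemma mul_div_mul_logb_div (b x : ℝ) {s : ℝ} (hs : s ≠ 0) :
    s * (x / s * logb b (x / s)) = x * logb b x - x * logb b s := by
  rcases eq_or_ne x 0 with rfl | hx
  · simp
  · rw [logb_div hx hs]
    field_simp

lemma mul_binH_div (d : ℝ) {s : ℝ} (hs : s ≠ 0) :
    s * binH (d / s) = -(d * logb 2 d) - (s - d) * logb 2 (s - d) + s * logb 2 s := by
  have h_compl : 1 - d / s = (s - d) / s := by field_simp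
  unfold binH
  rw [h_compl]
  linear_combination -mul_div_mul_logb_div 2 d hs - mul_div_mul_logb_div 2 (s - d) hs

lemma binH_sub_mul_binH_div {p d : ℝ} (hs : 1 - p + d ≠ 0) :
    binH d - (1 - p + d) * binH (d / (1 - p + d)) =
      (1 - p) * logb 2 (1 - p) - (1 - d) * logb 2 (1 - d) -
        (1 - p + d) * logb 2 (1 - p + d) := by
  rw [mul_binH_div d hs, show 1 - p + d - d = 1 - p by ring, binH]
  ring

lemma exp_neg_one_le_half : exp (-1) ≤ 1 / 2 := by
  rw [exp_neg, one_div]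
  exact inv_anti₀ two_pos exp_one_gt_two.le

lemma mul_log_le_mul_log_of_half_le {a b : ℝ} (ha : 1 / 2 ≤ a) (hab : a ≤ b) :
    a * log a ≤ b * log b :=
  mul_log_strictMonoOn.monotoneOn (exp_neg_one_le_half.trans ha)
    (exp_neg_one_le_half.trans (ha.trans hab)) hab

section

variable {p d : ℝ}

lemma mul_log_deficit_le_sub (hd0 : 0 ≤ d) (hdp : d ≤ p) (hp : p ≤ 1 / 2) :
    (1 - p) * log (1 - p) - (1 - d) * log (1 - d) - (1 - p + d) * log (1 - p + d) ≤ p - d := by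
  have h_mono :=
    mul_log_le_mul_log_of_half_le (a := 1 - p) (b := 1 - d) (by linarith) (by linarith)
  have h_neg := self_sub_one_le_mul_log (x := 1 - p + d) (by linarith)
  linarith

lemma mul_log_deficit_le (hd0 : 0 ≤ d) (hdp : d ≤ p) (hp : p ≤ 1 / 2) :
    (1 - p) * log (1 - p) - (1 - d) * log (1 - d) - (1 - p + d) * log (1 - p + d) ≤ d := by
  have h_mono :=
    mul_log_le_mul_log_of_half_le (a := 1 - p) (b := 1 - p + d) (by linarith) (by linarith)
  have h_neg := self_sub_one_le_mul_log (x := 1 - d) (by linarith)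
  linarith

end

theorem stmt_18 (p d : ℝ) (hd0 : 0 ≤ d) (hdp : d ≤ p) (hp : p ≤ 1 / 2) :
    binH d - (1 - p + d) * binH (d / (1 - p + d)) =
      (1 - p) * Real.logb 2 (1 - p) - (1 - d) * Real.logb 2 (1 - d) -
        (1 - p + d) * Real.logb 2 (1 - p + d) ∧
    binH d - (1 - p + d) * binH (d / (1 - p + d)) ≤
      min (2 * (p - d) * Real.logb 2 (Real.exp 1)) (2 * d * Real.logb 2 (Real.exp 1)) := by
  have h_eq := binH_sub_mul_binH_div (p := p) (d := d) (by linarith)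
  refine ⟨h_eq, ?_⟩
  have h_log2 : 0 < log 2 := log_pos one_lt_two
  have h_ln : (1 - p) * logb 2 (1 - p) - (1 - d) * logb 2 (1 - d) -
      (1 - p + d) * logb 2 (1 - p + d) =
      ((1 - p) * log (1 - p) - (1 - d) * log (1 - d) - (1 - p + d) * log (1 - p + d)) / log 2 := by
    simp only [logb]
    ring
  rw [h_eq, h_ln, logb, log_exp, mul_one_div, mul_one_div, le_min_iff,
    div_le_div_iff_of_pos_right h_log2, div_le_div_iff_of_pos_right h_log2]
  exact ⟨by linarith [mul_log_deficit_le_sub hd0 hdp hp],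
    by linarith [mul_log_deficit_le hd0 hdp hp]⟩
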